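/- In the tableau for an LTLfMT formula augmented with the PRUNE rule, the EMPTY rule and the PRUNE rule are never both applicable to the same node: if they were, the EMPTY rule would already have triggered at the earlier repeated poised node identified by the PRUNE rule, and the branch would already have been accepted. -/

import Mathlib

namespace LTLfMT

/-- A first-order (mono-sorted rendering of a multi-sorted) signature
`Σ = ⟨S, P, F, V, W⟩` with predicate symbols `P`, function symbols `F`,
a finite nonempty set `V` of data variables and a disjoint set `W` of
quantification variables. -/
structure Signature : Type 1 where
  P : Type
  F : Type
  V : Type
  W : Type
  finV : Fintype V
  neV : Nonempty V
  decV : DecidableEq V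
  decW : DecidableEq W

attribute [instance] Signature.finV Signature.neV Signature.decV Signature.decW

variable {σ : Signature}

mutual
/-- Terms: data variables `v`, quantification variables `w`, next `◦v`,
weak next `~◦v`, and function applications. -/
inductive Tm (σ : Signature) : Type
  | var : σ.V → Tm σ
  | qvar : σ.W → Tm σ
  | nxt : σ.V → Tm σ
  | wnxt : σ.V → Tm σ
  | app : σ.F → TmList σ → Tm σ
inductive TmList (σ : Signature) : Type
  | nil : TmList σ
  | cons : Tm σ → TmList σ → TmList σ
end

mutual
/-- Does a term contain a next (`◦`) subterm? -/
def Tm.hasNxt : Tm σ → Bool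
  | .var _ => false
  | .qvar _ => false
  | .nxt _ => true
  | .wnxt _ => false
  | .app _ ts => TmList.hasNxt ts
def TmList.hasNxt : TmList σ → Bool
  | .nil => false
  | .cons t ts => Tm.hasNxt t || TmList.hasNxt ts
end

mutual
/-- Does a term contain a weak-next (`~◦`) subterm? -/
def Tm.hasWnxt : Tm σ → Bool
  | .var _ => false
  | .qvar _ => false
  | .nxt _ => false
  | .wnxt _ => true
  | .app _ ts => TmList.hasWnxt ts
def TmList.hasWnxt : TmList σ → Bool
  | .nil => false
  | .cons t ts => Tm.hasWnxt t || TmList.hasWnxt ts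
end

mutual
/-- The quantification variables (from `W`) occurring in a term. -/
def Tm.wvars : Tm σ → Set σ.W
  | .var _ => ∅
  | .qvar w => {w}
  | .nxt _ => ∅
  | .wnxt _ => ∅
  | .app _ ts => TmList.wvars ts
def TmList.wvars : TmList σ → Set σ.W
  | .nil => ∅
  | .cons t ts => Tm.wvars t ∪ TmList.wvars ts
end

mutual
/-- The indexed ("stepped") data variables mentioned by a term occurring in
the `j`-th constraint: `v` yields `v^j`, while `◦v`, `~◦v` yield `v^(j+1)`. -/
def Tm.ivars (j : ℕ) : Tm σ → Set (ℕ × σ.V)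
  | .var v => {(j, v)}
  | .qvar _ => ∅
  | .nxt v => {(j+1, v)}
  | .wnxt v => {(j+1, v)}
  | .app _ ts => TmList.ivars j ts
def TmList.ivars (j : ℕ) : TmList σ → Set (ℕ × σ.V)
  | .nil => ∅
  | .cons t ts => Tm.ivars j t ∪ TmList.ivars j ts
end

/-- First-order formulas `λ` (in negation normal form), built from (possibly
negated) atoms — including built-in equality atoms and the fresh nullary
predicate `ℓ` used in the tableau machinery — by `∧`, `∨`, `∃w`, `∀w`. -/
inductive FO (σ : Signature) : Type
  | ell : FO σ
  | eq : Tm σ → Tm σ → FO σ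
  | ne : Tm σ → Tm σ → FO σ
  | patom : σ.P → TmList σ → FO σ
  | npatom : σ.P → TmList σ → FO σ
  | conj : FO σ → FO σ → FO σ
  | disj : FO σ → FO σ → FO σ
  | ex : σ.W → FO σ → FO σ
  | all : σ.W → FO σ → FO σ

def FO.hasNxt : FO σ → Bool
  | .ell => false
  | .eq t u | .ne t u => t.hasNxt || u.hasNxt
  | .patom _ ts | .npatom _ ts => ts.hasNxt
  | .conj ψ χ | .disj ψ χ => ψ.hasNxt || χ.hasNxt
  | .ex _ ψ | .all _ ψ => ψ.hasNxt

def FO.hasWnxt : FO σ → Bool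
  | .ell => false
  | .eq t u | .ne t u => t.hasWnxt || u.hasWnxt
  | .patom _ ts | .npatom _ ts => ts.hasWnxt
  | .conj ψ χ | .disj ψ χ => ψ.hasWnxt || χ.hasWnxt
  | .ex _ ψ | .all _ ψ => ψ.hasWnxt

/-- The free quantification variables of a first-order formula. -/
def FO.freeW : FO σ → Set σ.W
  | .ell => ∅
  | .eq t u | .ne t u => t.wvars ∪ u.wvars
  | .patom _ ts | .npatom _ ts => ts.wvars
  | .conj ψ χ | .disj ψ χ => ψ.freeW ∪ χ.freeW
  | .ex w ψ | .all w ψ => ψ.freeW \ {w}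

/-- Number of quantifier occurrences in a first-order formula. -/
def FO.qcount : FO σ → ℕ
  | .ell | .eq _ _ | .ne _ _ | .patom _ _ | .npatom _ _ => 0
  | .conj ψ χ | .disj ψ χ => ψ.qcount + χ.qcount
  | .ex _ ψ | .all _ ψ => ψ.qcount + 1

/-- LTLfMT formulas: `⊤`, first-order formulas, `∧`, `∨`,
tomorrow `X`, weak tomorrow `wX`, until `U`, release `R`. -/
inductive Frm (σ : Signature) : Type
  | tt : Frm σ
  | fo : FO σ → Frm σ
  | conj : Frm σ → Frm σ → Frm σ
  | disj : Frm σ → Frm σ → Frm σ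
  | nxt : Frm σ → Frm σ
  | wnxt : Frm σ → Frm σ
  | untl : Frm σ → Frm σ → Frm σ
  | rel : Frm σ → Frm σ → Frm σ

def Frm.hasNxt : Frm σ → Bool
  | .tt => false
  | .fo C => C.hasNxt
  | .conj ψ χ | .disj ψ χ | .untl ψ χ | .rel ψ χ => ψ.hasNxt || χ.hasNxt
  | .nxt ψ | .wnxt ψ => ψ.hasNxt

def Frm.hasWnxt : Frm σ → Bool
  | .tt => false
  | .fo C => C.hasWnxt
  | .conj ψ χ | .disj ψ χ | .untl ψ χ | .rel ψ χ => ψ.hasWnxt || χ.hasWnxt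
  | .nxt ψ | .wnxt ψ => ψ.hasWnxt

/-- A `Σ`-structure: a (nonempty) carrier together with interpretations of the
function and predicate symbols.  Equality atoms are interpreted by identity. -/
structure Struc (σ : Signature) : Type 1 where
  D : Type
  dne : Nonempty D
  fI : σ.F → List D → D
  pI : σ.P → List D → Prop

/-- A class of structures, representing (the models of) a `Σ`-theory `T`. -/
def Theory (σ : Signature) : Type 1 := Struc σ → Prop

mutual
/-- Evaluation of a term, where `a` interprets the current-state variables,
`a'` the next-state (`◦v`, `~◦v`) variables and `g` is the environment for
quantification variables. -/
def Tm.eval (M : Struc σ) (a a' : σ.V → M.D) (g : σ.W → M.D) : Tm σ → M.D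
  | .var v => a v
  | .qvar w => g w
  | .nxt v => a' v
  | .wnxt v => a' v
  | .app f ts => M.fI f (TmList.eval M a a' g ts)
def TmList.eval (M : Struc σ) (a a' : σ.V → M.D) (g : σ.W → M.D) : TmList σ → List M.D
  | .nil => []
  | .cons t ts => Tm.eval M a a' g t :: TmList.eval M a a' g ts
end

/-- Updating an environment at a quantification variable. -/
def updW {D : Type} (g : σ.W → D) (w : σ.W) (d : D) : σ.W → D :=
  fun w' => if w' = w then d else g w'

/-- The guard implementing the `L` operator on atoms: when `useL` is set, an
atom containing a `◦`-term becomes `ℓ ∧ A`, an atom containing a `~◦`-term (but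
no `◦`-term) becomes `ℓ → A`. -/
def lguard (ellv : Prop) (useL : Bool) (hn hw : Bool) (base : Prop) : Prop :=
  if useL then (if hn then ellv ∧ base else if hw then ellv → base else base) else base

/-- Satisfaction of a first-order formula in `M` w.r.t. a current-state
assignment `a`, a next-state assignment `a'` and environment `g`; `ellv` is the
truth value of the fresh predicate `ℓ`, and `useL` tells whether the `L`
operator is (semantically) applied to the formula. -/
def FO.sat (M : Struc σ) (ellv : Prop) (useL : Bool) (a a' : σ.V → M.D) (g : σ.W → M.D) :
    FO σ → Prop
  | .ell => ellv
  | .eq t u =>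
      lguard ellv useL (t.hasNxt || u.hasNxt) (t.hasWnxt || u.hasWnxt)
        (Tm.eval M a a' g t = Tm.eval M a a' g u)
  | .ne t u =>
      ¬ lguard ellv useL (t.hasNxt || u.hasNxt) (t.hasWnxt || u.hasWnxt)
        (Tm.eval M a a' g t = Tm.eval M a a' g u)
  | .patom p ts =>
      lguard ellv useL ts.hasNxt ts.hasWnxt (M.pI p (TmList.eval M a a' g ts))
  | .npatom p ts =>
      ¬ lguard ellv useL ts.hasNxt ts.hasWnxt (M.pI p (TmList.eval M a a' g ts))
  | .conj ψ χ => FO.sat M ellv useL a a' g ψ ∧ FO.sat M ellv useL a a' g χ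
  | .disj ψ χ => FO.sat M ellv useL a a' g ψ ∨ FO.sat M ellv useL a a' g χ
  | .ex w ψ => ∃ d : M.D, FO.sat M ellv useL a a' (updW g w d) ψ
  | .all w ψ => ∀ d : M.D, FO.sat M ellv useL a a' (updW g w d) ψ

/-- A run `σ = (M, ⟨α₀, …, α_{n−1}⟩)`: a structure together with a finite
sequence of state variable assignments. -/
structure Run (σ : Signature) : Type 1 where
  M : Struc σ
  xs : List (σ.V → M.D)

/-- Satisfaction of a first-order formula at instant `i` of a run: at non-last
instants `◦v`/`~◦v` are evaluated by `α_{i+1}`; at the last instant atoms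
containing `◦` are false and atoms containing `~◦` but not `◦` hold vacuously. -/
def Run.satFO (r : Run σ) (i : ℕ) (C : FO σ) : Prop :=
  ∃ a ∈ r.xs[i]?,
    ((∃ b ∈ r.xs[i+1]?, ∀ g : σ.W → r.M.D, FO.sat r.M False false a b g C) ∨
     (r.xs[i+1]? = none ∧ ∀ g : σ.W → r.M.D, FO.sat r.M False true a a g C))

/-- Finite-trace satisfaction `σ ⊨ⁱ φ` of LTLfMT formulas. -/
def Run.sat (r : Run σ) : ℕ → Frm σ → Prop
  | _, .tt => True
  | i, .fo C => r.satFO i C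
  | i, .conj ψ χ => r.sat i ψ ∧ r.sat i χ
  | i, .disj ψ χ => r.sat i ψ ∨ r.sat i χ
  | i, .nxt ψ => i + 1 < r.xs.length ∧ r.sat (i+1) ψ
  | i, .wnxt ψ => i = r.xs.length - 1 ∨ r.sat (i+1) ψ
  | i, .untl ψ χ =>
      ∃ j, i ≤ j ∧ j < r.xs.length ∧ r.sat j χ ∧ ∀ k, i ≤ k → k < j → r.sat k ψ
  | i, .rel ψ χ =>
      (∀ j, i ≤ j → j < r.xs.length → r.sat j χ) ∨
      ∃ j, i ≤ j ∧ j < r.xs.length ∧ r.sat j ψ ∧ ∀ k, i ≤ k → k ≤ j → r.sat k χ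

/-- `T`-satisfiability of an LTLfMT formula: some run whose structure is a
model of `T` satisfies it at position `0`. -/
def Satisfiable (T : Theory σ) (φ : Frm σ) : Prop :=
  ∃ r : Run σ, T r.M ∧ 0 < r.xs.length ∧ r.sat 0 φ


/-! ### Constraint sequences, `Ω` and history constraints -/

/-- The set of first-order formulas in a label / atom. -/
def FOpart (Γ : Set (Frm σ)) : Set (FO σ) := {C | Frm.fo C ∈ Γ}

/-- The constraint sequence of a sequence of labels / atoms. -/
def consOf (πs : List (Set (Frm σ))) : List (Set (FO σ)) := πs.map FOpart

/-- `SeqSat M ℓ α⃗ C⃗` renders satisfaction of the stepped conjunction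
`Ω(C⃗) = ⋀_{i<m-1} Cᵢ^{(i)} ∧ L(C_{m-1})^{(m-1)}` by the structure `M`, the
truth value `ℓ` for the fresh predicate, and the sequence of state variable
assignments `α⃗ = ⟨α₀, …, α_m⟩` interpreting the indexed variable copies. -/
def SeqSat (M : Struc σ) (ellv : Prop) (as : List (σ.V → M.D)) (Cs : List (Set (FO σ))) :
    Prop :=
  as.length = Cs.length + 1 ∧
  ∀ i : ℕ, ∀ a ∈ as[i]?, ∀ b ∈ as[i+1]?, ∀ C ∈ Cs.getD i ∅, ∀ g : σ.W → M.D,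
    FO.sat M ellv (decide (i + 1 = Cs.length)) a b g C

/-- `Ω(C⃗)` is `T`-satisfiable (all symbols not constrained by `T`, including
`ℓ`, being free/uninterpreted). -/
def OmegaSat (T : Theory σ) (Cs : List (Set (FO σ))) : Prop :=
  ∃ M : Struc σ, T M ∧ ∃ (ellv : Prop) (as : List (σ.V → M.D)), SeqSat M ellv as Cs

/-- Semantics of the history constraint
`h(C⃗) = (∃V⁰…V^{m−1}. Ω(C⃗))[V^m / V]` at the assignment `α` (for the empty
sequence, `h = ⊤`). -/
def hSat (M : Struc σ) (ellv : Prop) (α : σ.V → M.D) (Cs : List (Set (FO σ))) : Prop :=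
  Cs = [] ∨ ∃ as : List (σ.V → M.D), SeqSat M ellv (as ++ [α]) Cs

/-- `T`-entailment between history constraints: `h(C⃗) ⊨_T h(C⃗')`. -/
def hEntails (T : Theory σ) (Cs Cs' : List (Set (FO σ))) : Prop :=
  ∀ M : Struc σ, T M → ∀ (ellv : Prop) (α : σ.V → M.D),
    hSat M ellv α Cs → hSat M ellv α Cs'

/-- `T`-equivalence between history constraints. -/
def hEquiv (T : Theory σ) (Cs Cs' : List (Set (FO σ))) : Prop :=
  ∀ M : Struc σ, T M → ∀ (ellv : Prop) (α : σ.V → M.D),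
    hSat M ellv α Cs ↔ hSat M ellv α Cs'

/-! ### The closure, expansion rules and the tableau -/

/-- The closure of `φ`: the smallest set containing all subformulas of `φ`,
together with `X(ψ U χ)` for `ψ U χ` in the closure and `wX(ψ R χ)` for
`ψ R χ` in the closure. -/
inductive closure (φ : Frm σ) : Frm σ → Prop
  | refl : closure φ φ
  | conj_l {ψ χ} : closure φ (.conj ψ χ) → closure φ ψ
  | conj_r {ψ χ} : closure φ (.conj ψ χ) → closure φ χ
  | disj_l {ψ χ} : closure φ (.disj ψ χ) → closure φ ψ
  | disj_r {ψ χ} : closure φ (.disj ψ χ) → closure φ χ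
  | nxt {ψ} : closure φ (.nxt ψ) → closure φ ψ
  | wnxt {ψ} : closure φ (.wnxt ψ) → closure φ ψ
  | untl_l {ψ χ} : closure φ (.untl ψ χ) → closure φ ψ
  | untl_r {ψ χ} : closure φ (.untl ψ χ) → closure φ χ
  | rel_l {ψ χ} : closure φ (.rel ψ χ) → closure φ ψ
  | rel_r {ψ χ} : closure φ (.rel ψ χ) → closure φ χ
  | untl_x {ψ χ} : closure φ (.untl ψ χ) → closure φ (.nxt (.untl ψ χ))
  | rel_wx {ψ χ} : closure φ (.rel ψ χ) → closure φ (.wnxt (.rel ψ χ))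

/-- The formulas to which an expansion rule applies. -/
def Frm.expandable : Frm σ → Prop
  | .conj _ _ | .disj _ _ | .untl _ _ | .rel _ _ => True
  | _ => False

/-- `Child ψ S` holds iff `S` is one of the expansion sets `Γ₁(ψ)`, `Γ₂(ψ)`
of the expansion rules DISJUNCTION, CONJUNCTION, UNTIL, RELEASE. -/
inductive Child : Frm σ → Set (Frm σ) → Prop
  | disj_l {ψ χ : Frm σ} : Child (.disj ψ χ) {ψ}
  | disj_r {ψ χ : Frm σ} : Child (.disj ψ χ) {χ}
  | conj {ψ χ : Frm σ} : Child (.conj ψ χ) {ψ, χ}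
  | untl_l {ψ χ : Frm σ} : Child (.untl ψ χ) {χ}
  | untl_r {ψ χ : Frm σ} : Child (.untl ψ χ) {ψ, .nxt (.untl ψ χ)}
  | rel_l {ψ χ : Frm σ} : Child (.rel ψ χ) {ψ, χ}
  | rel_r {ψ χ : Frm σ} : Child (.rel ψ χ) {χ, .wnxt (.rel ψ χ)}

/-- A node label is poised if no expansion rule is applicable to it. -/
def Poised (Γ : Set (Frm σ)) : Prop := ∀ ψ ∈ Γ, ¬ ψ.expandable

/-- The label produced by the STEP rule. -/
def stepLabel (Γ : Set (Frm σ)) : Set (Frm σ) :=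
  {ψ | Frm.nxt ψ ∈ Γ ∨ Frm.wnxt ψ ∈ Γ}

/-- The EMPTY rule for a branch with poised-node labels `πs`: the last poised
node contains no tomorrow-rooted formulas, and `Ω ∧ ¬ℓ` is `T`-satisfiable. -/
def EmptyRule (T : Theory σ) (πs : List (Set (Frm σ))) : Prop :=
  (∀ ψ : Frm σ, Frm.nxt ψ ∉ πs.getD (πs.length - 1) ∅) ∧
  ∃ M : Struc σ, T M ∧ ∃ as : List (σ.V → M.D), SeqSat M False as (consOf πs)

/-- The CONTRADICTION rule: `Ω` is unsatisfiable modulo `T` (with all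
remaining symbols, including `ℓ`, uninterpreted). -/
def ContraRule (T : Theory σ) (πs : List (Set (Frm σ))) : Prop :=
  ¬ OmegaSat T (consOf πs)

/-- The PRUNE rule for a branch with poised-node labels `πs = ⟨π₀,…,π_{m−1}⟩`:
`Γ(πᵢ) = Γ(π_{m−1})` for some `i < m−1` and `h(π⃗) ⊨_T h(π⃗_{≤i})`. -/
def PruneRule (T : Theory σ) (πs : List (Set (Frm σ))) : Prop :=
  ∃ i, i + 2 ≤ πs.length ∧ πs.getD i ∅ = πs.getD (πs.length - 1) ∅ ∧
    hEntails T (consOf πs) (consOf (πs.take (i+1)))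

/-- A strategy selecting, from the history of labels from the root and the
current label, the formula to which an expansion rule is applied; distinct
strategies yield the distinct tableaux for a formula. -/
def Strategy (σ : Signature) : Type :=
  List (Set (Frm σ)) → Set (Frm σ) → Frm σ

/-- A strategy is valid if on non-poised labels it picks an expandable member. -/
def ValidStrategy (st : Strategy σ) : Prop :=
  ∀ hist Γ, ¬ Poised Γ → st hist Γ ∈ Γ ∧ (st hist Γ).expandable

/-- `TPath T st prune φ πs hist Γ`: in the tableau for `φ` (built according to
strategy `st`, and augmented with the PRUNE rule if `prune = true`) there is a
node with label `Γ`, whose sequence of ancestor labels is `hist` and whose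
sequence of poised ancestor labels is `πs`.  The root is labelled `{φ}`; an
expansion rule is applied whenever possible; the STEP rule applies to poised
nodes only when the branch is not ready to be accepted (EMPTY) or rejected
(CONTRADICTION, and PRUNE when enabled). -/
inductive TPath (T : Theory σ) (st : Strategy σ) (prune : Bool) (φ : Frm σ) :
    List (Set (Frm σ)) → List (Set (Frm σ)) → Set (Frm σ) → Prop
  | root : TPath T st prune φ [] [] {φ}
  | expand {πs hist Γ S} :
      TPath T st prune φ πs hist Γ → ¬ Poised Γ →
      st hist Γ ∈ Γ → Child (st hist Γ) S →
      TPath T st prune φ πs (hist ++ [Γ]) ((Γ \ {st hist Γ}) ∪ S)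
  | step {πs hist Γ} :
      TPath T st prune φ πs hist Γ → Poised Γ →
      ¬ EmptyRule T (πs ++ [Γ]) →
      ¬ ContraRule T (πs ++ [Γ]) →
      (prune = true → ¬ PruneRule T (πs ++ [Γ])) →
      TPath T st prune φ (πs ++ [Γ]) (hist ++ [Γ]) (stepLabel Γ)

/-- The tableau contains an accepted branch: some branch ends in a poised node
on which the EMPTY rule triggers. -/
def HasAcceptedBranch (T : Theory σ) (st : Strategy σ) (prune : Bool) (φ : Frm σ) : Prop :=
  ∃ πs hist Γ, TPath T st prune φ πs hist Γ ∧ Poised Γ ∧ EmptyRule T (πs ++ [Γ])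

/-- The set of nodes of the tableau (a node is determined by its ancestor
history together with its label). -/
def TableauNodes (T : Theory σ) (st : Strategy σ) (prune : Bool) (φ : Frm σ) :
    Set (List (Set (Frm σ)) × Set (Frm σ)) :=
  {p | ∃ πs, TPath T st prune φ πs p.1 p.2}

/-! ### Atoms and pre-models -/

/-- Semantic entailment (modulo `T`) of a formula from a set of formulas, over
runs and instants. -/
def Entails (T : Theory σ) (S : Set (Frm σ)) (ψ : Frm σ) : Prop :=
  ∀ r : Run σ, T r.M → ∀ i, i < r.xs.length →
    (∀ χ ∈ S, r.sat i χ) → r.sat i ψ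

/-- The atom of a node label: all formulas of the closure of `φ` entailed by it. -/
def atomOf (T : Theory σ) (φ : Frm σ) (Γ : Set (Frm σ)) : Set (Frm σ) :=
  {ψ | closure φ ψ ∧ Entails T Γ ψ}

/-- An atom `Δ` for `φ`: a subset of the closure of `φ` whose first-order part
is `T`-satisfiable, which contains one of the expansion sets of each of its
expandable members, and which is closed under logical deduction as far as the
closure is concerned. -/
structure IsAtom (T : Theory σ) (φ : Frm σ) (Δ : Set (Frm σ)) : Prop where
  sub : ∀ ψ ∈ Δ, closure φ ψ
  fo_sat : ∃ M : Struc σ, T M ∧ ∃ a a' : σ.V → M.D,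
    ∀ C ∈ FOpart Δ, ∀ g : σ.W → M.D, FO.sat M True false a a' g C
  exp : ∀ ψ ∈ Δ, ψ.expandable → ∃ S, Child ψ S ∧ S ⊆ Δ
  ded : ∀ ψ, closure φ ψ → Entails T Δ ψ → ψ ∈ Δ

/-- The conditions of a pre-model except minimality. -/
structure IsPreModelAux (T : Theory σ) (φ : Frm σ) (Δs : List (Set (Frm σ))) : Prop where
  ne : Δs ≠ []
  atoms : ∀ Δ ∈ Δs, IsAtom T φ Δ
  head : φ ∈ Δs.getD 0 ∅
  last_noNxt : ∀ C ∈ FOpart (Δs.getD (Δs.length - 1) ∅), C.hasNxt = false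
  nxt_prop : ∀ i (ψ : Frm σ), Frm.nxt ψ ∈ Δs.getD i ∅ →
    i + 2 ≤ Δs.length ∧ ψ ∈ Δs.getD (i+1) ∅
  wnxt_prop : ∀ i (ψ : Frm σ), Frm.wnxt ψ ∈ Δs.getD i ∅ →
    i = Δs.length - 1 ∨ ψ ∈ Δs.getD (i+1) ∅
  untl_ful : ∀ i (ψ χ : Frm σ), i < Δs.length → Frm.untl ψ χ ∈ Δs.getD i ∅ →
    ∃ j, i ≤ j ∧ j < Δs.length ∧ χ ∈ Δs.getD j ∅ ∧
      ∀ k, i ≤ k → k < j → ψ ∈ Δs.getD k ∅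
  rel_ful : ∀ i (ψ χ : Frm σ), i < Δs.length → Frm.rel ψ χ ∈ Δs.getD i ∅ →
    (∀ j, i ≤ j → j < Δs.length → χ ∈ Δs.getD j ∅) ∨
    ∃ j, i ≤ j ∧ j < Δs.length ∧ ψ ∈ Δs.getD j ∅ ∧
      ∀ k, i ≤ k → k ≤ j → χ ∈ Δs.getD k ∅

/-- A pre-model for `φ`: a sequence of atoms satisfying the propagation and
fulfillment conditions, all of whose members are minimal with respect to set
inclusion. -/
def IsPreModel (T : Theory σ) (φ : Frm σ) (Δs : List (Set (Frm σ))) : Prop :=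
  IsPreModelAux T φ Δs ∧
  ∀ Δs' : List (Set (Frm σ)), IsPreModelAux T φ Δs' → Δs'.length = Δs.length →
    (∀ i, Δs'.getD i ∅ ⊆ Δs.getD i ∅) → Δs' = Δs

/-- A pre-model is satisfiable if `Ω(⟨F(Δ₀),…,F(Δ_{n−1})⟩) ∧ ¬ℓ` is
`T`-satisfiable. -/
def SatPreModel (T : Theory σ) (Δs : List (Set (Frm σ))) : Prop :=
  ∃ M : Struc σ, T M ∧ ∃ as : List (σ.V → M.D), SeqSat M False as (consOf Δs)

/-! ### Finite memory and decidability (as existence of decision functions) -/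

/-- The history set of `φ`: the (semantic renderings of the) history
constraints `h(Δ⃗_{≤i})` over all pre-models `Δ⃗` of `φ`. -/
def HistorySet (T : Theory σ) (φ : Frm σ) : Set (List (Set (FO σ))) :=
  {Cs | ∃ Δs i, IsPreModel T φ Δs ∧ i < Δs.length ∧ Cs = consOf (Δs.take (i+1))}

/-- `φ` has finite memory: its history set is finite up to `T`-equivalence. -/
def FiniteMemory (T : Theory σ) (φ : Frm σ) : Prop :=
  ∃ S : Set (List (Set (FO σ))), S.Finite ∧
    ∀ Cs ∈ HistorySet T φ, ∃ Cs' ∈ S, hEquiv T Cs Cs'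

/-- Decidability of the underlying theory, rendered as the existence of
effective tests for `T`-satisfiability of the constraint formulas `Ω` and for
`T`-entailment between history constraints. -/
def TheoryDecidable (T : Theory σ) : Prop :=
  (∃ dec : List (Set (FO σ)) → Bool, ∀ Cs, dec Cs = true ↔ OmegaSat T Cs) ∧
  (∃ dece : List (Set (FO σ)) → List (Set (FO σ)) → Bool,
    ∀ Cs Cs', dece Cs Cs' = true ↔ hEntails T Cs Cs')

theorem SeqSat.exists_hSat {M : Struc σ} {ellv : Prop} {as : List (σ.V → M.D)}
    {Cs : List (Set (FO σ))} (h : SeqSat M ellv as Cs) : ∃ α, hSat M ellv α Cs := by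
  rcases List.eq_nil_or_concat as with rfl | ⟨as', α, rfl⟩
  · simp [SeqSat] at h
  · exact ⟨α, Or.inr ⟨as', by simpa using h⟩⟩

theorem hSat.exists_seqSat {M : Struc σ} {ellv : Prop} {α : σ.V → M.D}
    {Cs : List (Set (FO σ))} (h : hSat M ellv α Cs) (hCs : Cs ≠ []) :
    ∃ as, SeqSat M ellv as Cs := by
  obtain ⟨as, has⟩ := h.resolve_left hCs
  exact ⟨_, has⟩

/-- Works because `h(C⃗)` is `Ω(C⃗)` with all but its last state quantified away, so the
entailment carries the model and the value of `ℓ` over unchanged. -/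
theorem hEntails.seqSat {T : Theory σ} {Cs Cs' : List (Set (FO σ))} (hT : hEntails T Cs Cs')
    (hCs' : Cs' ≠ []) {M : Struc σ} (hM : T M) {ellv : Prop} {as : List (σ.V → M.D)}
    (h : SeqSat M ellv as Cs) : ∃ as', SeqSat M ellv as' Cs' := by
  obtain ⟨α, hα⟩ := h.exists_hSat
  exact (hT M hM ellv α hα).exists_seqSat hCs'

theorem EmptyRule.take_of_pruneRule {T : Theory σ} {πs : List (Set (Frm σ))}
    (hE : EmptyRule T πs) (hP : PruneRule T πs) :
    ∃ i, i + 1 < πs.length ∧ EmptyRule T (πs.take (i + 1)) := by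
  obtain ⟨i, hi, hlabel, hT⟩ := hP
  refine ⟨i, by omega, ?_, ?_⟩
  · have hlast : (πs.take (i + 1)).getD ((πs.take (i + 1)).length - 1) ∅ = πs.getD i ∅ := by
      rw [List.length_take_of_le (by omega), Nat.add_sub_cancel, List.getD_eq_getElem?_getD,
        List.getElem?_take_of_lt (Nat.lt_succ_self i), ← List.getD_eq_getElem?_getD]
    rw [hlast, hlabel]
    exact hE.1
  · obtain ⟨M, hM, as, has⟩ := hE.2
    have hne : consOf (πs.take (i + 1)) ≠ [] := by
      rw [consOf, ← List.length_pos_iff, List.length_map, List.length_take]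
      omega
    exact ⟨M, hM, hT.seqSat hne hM has⟩

theorem TPath.not_emptyRule_take {T : Theory σ} {st : Strategy σ} {prune : Bool} {φ : Frm σ}
    {πs hist : List (Set (Frm σ))} {Γ : Set (Frm σ)} (h : TPath T st prune φ πs hist Γ) :
    ∀ i < πs.length, ¬ EmptyRule T (πs.take (i + 1)) := by
  induction h with
  | root => simp
  | expand _ _ _ _ ih => exact ih
  | step _ _ hnE _ _ ih =>
    intro i hi
    rw [List.length_append, List.length_singleton] at hi
    rcases Nat.lt_succ_iff_lt_or_eq.mp hi with hlt | rfl
    · rw [List.take_append_of_le_length (by omega)]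
      exact ih i hlt
    · rwa [List.take_of_length_le (by simp)]

/-- In the tableau for an LTLfMT formula augmented with the
PRUNE rule, the EMPTY rule and the PRUNE rule are never both applicable to the
same (poised) node: otherwise the EMPTY rule would already have triggered at
the earlier repeated poised node identified by PRUNE, and the branch would
already have been accepted. -/
theorem empty_prune_never_both (σ : Signature) (T : Theory σ) (φ : Frm σ)
    (st : Strategy σ) (hst : ValidStrategy st)
    (πs hist : List (Set (Frm σ))) (Γ : Set (Frm σ))
    (hpath : TPath T st true φ πs hist Γ) (hpoised : Poised Γ) :
    ¬ (EmptyRule T (πs ++ [Γ]) ∧ PruneRule T (πs ++ [Γ])) := by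
  rintro ⟨hE, hP⟩
  obtain ⟨i, hi, hEi⟩ := hE.take_of_pruneRule hP
  simp only [List.length_append, List.length_singleton, Nat.add_lt_add_iff_right] at hi
  rw [List.take_append_of_le_length hi] at hEi
  exact hpath.not_emptyRule_take i hi hEi

end LTLfMT
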